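/- Let V = ℂ³ with basis {u | v, h} (u even; v, h odd) and Lie superalgebra bracket [u,v] = h, [u,h] = c₂₆ v + c₃₆ h with c₂₆ c₃₆ ≠ 0 (other brackets zero, extended by skew-supersymmetry). Suppose the quadratic t² + c₃₆ c₂₆⁻¹ t - c₂₆⁻¹ has two distinct roots k₁ ≠ k₂ (so k₁k₂ = -c₂₆⁻¹, k₁+k₂ = -c₃₆c₂₆⁻¹). Then this Lie superalgebra is isomorphic to L₃^λ with λ = k₁/k₂, where L₃^λ has basis {e₁ | e₂, e₃} and brackets [e₁,e₂] = e₂, [e₁,e₃] = λ e₃, all odd-odd brackets zero. -/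

import Mathlib

/-!
`ad u` is diagonalisable on the odd part: for a root `k` of `c₂₆ t² + c₃₆ t = 1`, the functional
`ℓₖ(x) = k x₁ + x₂` satisfies `ℓₖ([u, y]) = k⁻¹ ℓₖ(y)`. Since `k₁ ≠ k₂`, the coordinates
`ℓ_{k₁}, ℓ_{k₂}` on the odd part, together with `x₀ / k₁` on the even part, form an even coordinate
change in which `ad(k₁ u)` acts by `diag(1, k₁ / k₂)`, which is the bracket of `L₃^λ`.
-/

namespace Stmt14

/-- V = ℂ³ with basis u = e₀ (even), v = e₁, h = e₂ (odd). -/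
abbrev V : Type := Fin 3 → ℂ

def hom (p : Bool) (x : V) : Prop := if p then x 0 = 0 else (x 1 = 0 ∧ x 2 = 0)

/-- bracket: [u,v] = h, [u,h] = c₂₆·v + c₃₆·h (extended by skew-supersymmetry). -/
def br (c26 c36 : ℂ) (x y : V) : V :=
  ![0, c26 * (x 0 * y 2 - x 2 * y 0),
    (x 0 * y 1 - x 1 * y 0) + c36 * (x 0 * y 2 - x 2 * y 0)]

/-- L₃^λ: [e₁,e₂] = e₂, [e₁,e₃] = λ·e₃, all odd-odd brackets zero. -/
def brL (l : ℂ) (x y : V) : V :=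
  ![0, x 0 * y 1 - x 1 * y 0, l * (x 0 * y 2 - x 2 * y 0)]

def IsLin (f : V → V) : Prop := ∀ (c : ℂ) (x y : V), f (c • x + y) = c • f x + f y

def IsEven (f : V → V) : Prop := ∀ (p : Bool) (x : V), hom p x → hom p (f x)

theorem isLin_linearMap (f : V →ₗ[ℂ] V) : IsLin f := fun c x y => by
  rw [map_add, map_smul]

section Vieta

variable {c26 c36 k1 k2 : ℂ}

theorem ne_zero_of_vieta (hk : k1 ≠ k2) (hprod : k1 * k2 = -c26⁻¹)
    (hsum : k1 + k2 = -(c36 * c26⁻¹)) : c26 ≠ 0 := by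
  rintro rfl
  simp only [inv_zero, neg_zero, mul_zero] at hprod hsum
  have hk1 : k1 = 0 := pow_eq_zero_iff two_ne_zero |>.mp (by linear_combination k1 * hsum - hprod)
  exact hk (by linear_combination 2 * hk1 - hsum)

theorem root_of_vieta (hc : c26 ≠ 0) (hprod : k1 * k2 = -c26⁻¹)
    (hsum : k1 + k2 = -(c36 * c26⁻¹)) : c26 * k1 ^ 2 + c36 * k1 = 1 := by
  have hprod' : c26 * (k1 * k2) = -1 := by rw [hprod]; field_simp
  have hsum' : c26 * (k1 + k2) = -c36 := by rw [hsum]; field_simp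
  linear_combination k1 * hsum' - hprod'

theorem ne_zero_of_root (h : c26 * k1 ^ 2 + c36 * k1 = 1) : k1 ≠ 0 := by
  rintro rfl
  norm_num at h

end Vieta

def eigenCoord (k : ℂ) (x : V) : ℂ := k * x 1 + x 2

theorem mul_eigenCoord_br {c26 c36 k : ℂ} (hk : c26 * k ^ 2 + c36 * k = 1) (x y : V) :
    k * eigenCoord k (br c26 c36 x y) = x 0 * eigenCoord k y - y 0 * eigenCoord k x := by
  simp only [eigenCoord, br, Matrix.cons_val]
  linear_combination (x 0 * y 2 - x 2 * y 0) * hk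

noncomputable def toL3 (k1 k2 : ℂ) : V →ₗ[ℂ] V where
  toFun x := ![x 0 / k1, eigenCoord k1 x / (k1 - k2), -eigenCoord k2 x / (k1 - k2)]
  map_add' x y := by
    funext i
    fin_cases i <;>
      simp only [eigenCoord, Pi.add_apply, Fin.isValue, Fin.zero_eta, Fin.mk_one, Fin.reduceFinMk,
        Matrix.cons_val, Matrix.cons_val_zero, Matrix.cons_val_one] <;> ring
  map_smul' c x := by
    funext i
    fin_cases i <;>
      simp only [eigenCoord, Pi.smul_apply, smul_eq_mul, RingHom.id_apply, Fin.isValue, Fin.zero_eta,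
        Fin.mk_one, Fin.reduceFinMk, Matrix.cons_val, Matrix.cons_val_zero, Matrix.cons_val_one] <;> ring

theorem isEven_toL3 (k1 k2 : ℂ) : IsEven (toL3 k1 k2) := by
  rintro (_ | _) x hx
  · obtain ⟨h1, h2⟩ := hx
    simp [hom, toL3, eigenCoord, h1, h2]
  · simp_all [hom, toL3]

theorem bijective_toL3 {k1 k2 : ℂ} (hk1 : k1 ≠ 0) (hk : k1 ≠ k2) :
    Function.Bijective (toL3 k1 k2) := by
  have hinj : Function.Injective (toL3 k1 k2) := by
    rw [← LinearMap.ker_eq_bot, LinearMap.ker_eq_bot']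
    intro x hx
    have h0 := congrFun hx 0
    have h1 := congrFun hx 1
    have h2 := congrFun hx 2
    simp only [toL3, eigenCoord, LinearMap.coe_mk, AddHom.coe_mk, Fin.isValue, Matrix.cons_val,
      Matrix.cons_val_zero, Matrix.cons_val_one, Pi.zero_apply, div_eq_zero_iff, hk1,
      sub_ne_zero.mpr hk, or_false] at h0 h1 h2
    have hx1 : x 1 = 0 := (mul_eq_zero.mp (by linear_combination h1 + h2 :
      (k1 - k2) * x 1 = 0)).resolve_left (sub_ne_zero.mpr hk)
    have hx2 : x 2 = 0 := by linear_combination h1 - k1 * hx1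
    funext i
    fin_cases i <;> simp [h0, hx1, hx2]
  exact ⟨hinj, LinearMap.injective_iff_surjective.mp hinj⟩

theorem toL3_br {c26 c36 k1 k2 : ℂ} (h1 : c26 * k1 ^ 2 + c36 * k1 = 1)
    (h2 : c26 * k2 ^ 2 + c36 * k2 = 1) (hk : k1 ≠ k2) (x y : V) :
    toL3 k1 k2 (br c26 c36 x y) = brL (k1 / k2) (toL3 k1 k2 x) (toL3 k1 k2 y) := by
  have hk1 := ne_zero_of_root h1
  have hk2 := ne_zero_of_root h2
  have hk12 := sub_ne_zero.mpr hk
  have e1 := mul_eigenCoord_br h1 x y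
  have e2 := mul_eigenCoord_br h2 x y
  funext i
  fin_cases i <;>
    simp only [toL3, brL, LinearMap.coe_mk, AddHom.coe_mk, Fin.isValue, Fin.zero_eta, Fin.mk_one,
      Fin.reduceFinMk, Matrix.cons_val, Matrix.cons_val_zero, Matrix.cons_val_one]
  · simp [br]
  · field_simp
    linear_combination e1
  · field_simp
    linear_combination -e2

theorem stmt14_general (c26 c36 k1 k2 : ℂ) (hk : k1 ≠ k2)
    (hprod : k1 * k2 = -c26⁻¹) (hsum : k1 + k2 = -(c36 * c26⁻¹)) :
    ∃ φ : V → V, IsLin φ ∧ IsEven φ ∧ Function.Bijective φ ∧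
      ∀ x y : V, φ (br c26 c36 x y) = brL (k1 / k2) (φ x) (φ y) := by
  have hc := ne_zero_of_vieta hk hprod hsum
  have h1 := root_of_vieta hc hprod hsum
  have h2 := root_of_vieta (k1 := k2) (k2 := k1) hc (by rwa [mul_comm]) (by rwa [add_comm])
  exact ⟨toL3 k1 k2, isLin_linearMap _, isEven_toL3 k1 k2,
    bijective_toL3 (ne_zero_of_root h1) hk, toL3_br h1 h2 hk⟩

theorem stmt14 (c26 c36 k1 k2 : ℂ) (hc : c26 * c36 ≠ 0) (hk : k1 ≠ k2)
    (hprod : k1 * k2 = -c26⁻¹) (hsum : k1 + k2 = -(c36 * c26⁻¹)) :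
    ∃ φ : V → V, IsLin φ ∧ IsEven φ ∧ Function.Bijective φ ∧
      ∀ x y : V, φ (br c26 c36 x y) = brL (k1 / k2) (φ x) (φ y) :=
  stmt14_general c26 c36 k1 k2 hk hprod hsum

end Stmt14
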